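/- arXiv:1808.00131 — 2 statements merged into one kernel-verified Lean document; each statement's English description precedes it below -/
import Mathlib

section
/- Let n ≥ 1 and η ∈ ℝ with |η| ≤ 1/2^n, and suppose P : Finset (Fin n) → ℝ is the probability mass function P T = 1/2^n + (−1)^{|T|}·η for every T ⊆ Fin n. Then for every payoff function v : Finset (Fin n) → ℝ and every i, the D-value ψ_i[v;P] equals the Banzhaf value b_i[v]. -/
open Finset

noncomputable section

/-- Expected marginal gain γ_i[v;P]. -/
def gainD (n : ℕ) (v P : Finset (Fin n) → ℝ) (i : Fin n) : ℝ :=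
  ∑ T ∈ univ.filter (fun T : Finset (Fin n) => i ∈ T), P T * (v T - v (T.erase i))

/-- Expected marginal loss λ_i[v;P]. -/
def lossD (n : ℕ) (v P : Finset (Fin n) → ℝ) (i : Fin n) : ℝ :=
  ∑ T ∈ univ.filter (fun T : Finset (Fin n) => i ∉ T), P T * (v (insert i T) - v T)

/-- The D-value ψ_i[v;P]. -/
def dVal (n : ℕ) (v P : Finset (Fin n) → ℝ) (i : Fin n) : ℝ :=
  gainD n v P i + lossD n v P i

/-- The Banzhaf value b_i[v]. -/
def banzhaf (n : ℕ) (v : Finset (Fin n) → ℝ) (i : Fin n) : ℝ :=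
  (1 / (2 : ℝ) ^ (n - 1)) *
    ∑ T ∈ univ.filter (fun T : Finset (Fin n) => i ∈ T), (v T - v (T.erase i))

/- Reindexing the marginal loss by T ↦ insert i T turns ψ_i into a sum over the coalitions T ∋ i
of (P T + P (T \ {i})) · (v T − v (T \ {i})). For the given P the two weights carry opposite signs
(−1)^|T|, so their η-parts cancel and each weight is 2/2^n = 1/2^(n−1), the Banzhaf weight. -/

section

variable {n : ℕ} (v P : Finset (Fin n) → ℝ) (i : Fin n)

theorem lossD_eq_sum_erase :
    lossD n v P i = ∑ T ∈ univ.filter (i ∈ ·), P (T.erase i) * (v T - v (T.erase i)) := by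
  refine sum_nbij' (insert i) (·.erase i) ?_ ?_ ?_ ?_ ?_ <;>
    simp +contextual [insert_erase]

theorem dVal_eq_sum_pair_weight :
    dVal n v P i =
      ∑ T ∈ univ.filter (i ∈ ·), (P T + P (T.erase i)) * (v T - v (T.erase i)) := by
  simp only [dVal, gainD, lossD_eq_sum_erase, ← sum_add_distrib, add_mul]

theorem dVal_eq_banzhaf_of_pair_weight
    (hP : ∀ T, i ∈ T → P T + P (T.erase i) = 1 / 2 ^ (n - 1)) :
    dVal n v P i = banzhaf n v i := by
  rw [dVal_eq_sum_pair_weight, banzhaf, mul_sum]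
  exact sum_congr rfl fun T hT => by rw [hP T (mem_filter.mp hT).2]

end

theorem neg_one_pow_card_add_neg_one_pow_card_erase {R α : Type*} [CommRing R] [DecidableEq α]
    {T : Finset α} {i : α} (hi : i ∈ T) :
    (-1 : R) ^ T.card + (-1) ^ (T.erase i).card = 0 := by
  rw [← card_erase_add_one hi, pow_succ]
  ring

theorem stmt_2_general (n : ℕ) (η : ℝ)
    (P : Finset (Fin n) → ℝ)
    (hP : ∀ T : Finset (Fin n), P T = 1 / (2 : ℝ) ^ n + (-1 : ℝ) ^ T.card * η)
    (v : Finset (Fin n) → ℝ) (i : Fin n) :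
    dVal n v P i = banzhaf n v i := by
  refine dVal_eq_banzhaf_of_pair_weight v P i fun T hT => ?_
  obtain ⟨m, rfl⟩ : ∃ m, n = m + 1 := Nat.exists_eq_add_one.mpr i.pos
  have hsign := neg_one_pow_card_add_neg_one_pow_card_erase (R := ℝ) hT
  rw [hP, hP, Nat.add_sub_cancel, pow_succ]
  linear_combination η * hsign

theorem stmt_2 (n : ℕ) (hn : 1 ≤ n) (η : ℝ) (hη : |η| ≤ 1 / 2 ^ n)
    (P : Finset (Fin n) → ℝ)
    (hP : ∀ T : Finset (Fin n), P T = 1 / (2 : ℝ) ^ n + (-1 : ℝ) ^ T.card * η)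
    (v : Finset (Fin n) → ℝ) (i : Fin n) :
    dVal n v P i = banzhaf n v i :=
  stmt_2_general n η P hP v i
end
end

section
/- Let n ≥ 1 and let P : Finset (Fin n) → ℝ be the prior P T = (|T|)!·(n−|T|)!/(n+1)!. If the payoff function v : Finset (Fin n) → ℝ is superadditive (v(S ∪ T) ≥ v S + v T for all disjoint S, T ⊆ Fin n) and v(∅) = 0, then the aggregate endowment bias satisfies ∑_{i} κ_i[v;P] ≥ 0. -/
/-!
Moving the loss sum onto the coalitions `T ∪ {i}` gives
`κ_i = ∑_{T ∌ i} (P (T ∪ {i}) - P T) (v (T ∪ {i}) - v T)`.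
For `P T = p_{|T|}` with `p_k = k! (n - k)! / (n + 1)!` one has `k p_{k-1} = (n - k + 1) p_k`,
so after summing over `i` the coefficient of `v S` collapses to `-2 p_{|S|}`, plus `1` at
`S = ∅` and at `S = univ`:  `∑_i κ_i = v ∅ + v univ - 2 ∑_S p_{|S|} v S`.
Since `p_{|S|} = p_{|Sᶜ|}` and `∑_S p_{|S|} = 1`, the last sum is
`∑_S p_{|S|} (v S + v Sᶜ) ≤ v univ` by superadditivity.
-/

open Finset

noncomputable section

/-- The endowment bias κ_i[v;P]. -/
def biasD (n : ℕ) (v P : Finset (Fin n) → ℝ) (i : Fin n) : ℝ :=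
  gainD n v P i - lossD n v P i

section Reindexing

variable {α M : Type*} [Fintype α] [DecidableEq α] [AddCommMonoid M]

lemma sum_filter_mem_eq_sum_filter_notMem_insert (i : α) (f : Finset α → M) :
    ∑ S with i ∈ S, f S = ∑ T with i ∉ T, f (insert i T) := by
  refine (sum_nbij' (insert i) (·.erase i) ?_ ?_ ?_ ?_ fun _ _ ↦ rfl).symm <;>
    intro T hT <;> simp_all

lemma sum_sum_filter_mem (g : Finset α → M) :
    ∑ i, ∑ S with i ∈ S, g S = ∑ S, #S • g S := by
  rw [sum_comm' (t' := univ) (s' := fun S ↦ S) (by simp)]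
  simp

lemma sum_sum_filter_notMem (g : Finset α → M) :
    ∑ i, ∑ T with i ∉ T, g T = ∑ T, #Tᶜ • g T := by
  rw [sum_comm' (t' := univ) (s' := fun T ↦ Tᶜ) (by simp)]
  simp

end Reindexing

lemma biasD_eq_sum_filter_notMem {n : ℕ} (v P : Finset (Fin n) → ℝ) (i : Fin n) :
    biasD n v P i =
      ∑ T with i ∉ T, (P (insert i T) - P T) * (v (insert i T) - v T) := by
  rw [biasD, gainD, lossD, sum_filter_mem_eq_sum_filter_notMem_insert, ← sum_sub_distrib]
  refine sum_congr rfl fun T hT ↦ ?_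
  rw [erase_insert (mem_filter.mp hT).2]
  ring

lemma sum_biasD_of_card {n : ℕ} (v P : Finset (Fin n) → ℝ) (w : ℕ → ℝ)
    (hP : ∀ T, P T = w #T) :
    ∑ i, biasD n v P i =
      ∑ S, (#S * (w #S - w (#S - 1)) - #Sᶜ * (w (#S + 1) - w #S)) * v S := by
  have hbias : ∀ i, biasD n v P i =
      ∑ S with i ∈ S, (w #S - w (#S - 1)) * v S
        - ∑ T with i ∉ T, (w (#T + 1) - w #T) * v T := by
    intro i
    rw [biasD_eq_sum_filter_notMem, sum_filter_mem_eq_sum_filter_notMem_insert,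
      ← sum_sub_distrib]
    refine sum_congr rfl fun T hT ↦ ?_
    rw [hP, hP, card_insert_of_notMem (mem_filter.mp hT).2, Nat.add_sub_cancel]
    ring
  simp only [hbias, sum_sub_distrib, sum_sum_filter_mem, sum_sum_filter_notMem, nsmul_eq_mul]
  rw [← sum_sub_distrib]
  exact sum_congr rfl fun S _ ↦ by ring

def priorWeight (n k : ℕ) : ℝ := (k.factorial * (n - k).factorial : ℝ) / (n + 1).factorial

lemma priorWeight_nonneg (n k : ℕ) : 0 ≤ priorWeight n k := by
  unfold priorWeight; positivity

lemma priorWeight_sub_self {n k : ℕ} (hk : k ≤ n) :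
    priorWeight n (n - k) = priorWeight n k := by
  rw [priorWeight, priorWeight, Nat.sub_sub_self hk, mul_comm]

lemma succ_mul_priorWeight_zero (n : ℕ) : (n + 1 : ℝ) * priorWeight n 0 = 1 := by
  rw [priorWeight, Nat.factorial_succ]
  push_cast
  field_simp
  simp

lemma sub_mul_priorWeight_succ {n k : ℕ} (hk : k < n) :
    ((n : ℝ) - k) * priorWeight n (k + 1) = (k + 1) * priorWeight n k := by
  obtain ⟨m, rfl⟩ := Nat.exists_eq_add_of_lt hk
  rw [priorWeight, priorWeight, show k + m + 1 - (k + 1) = m by omega,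
    show k + m + 1 - k = m + 1 by omega, Nat.factorial_succ k, Nat.factorial_succ m]
  push_cast
  ring

lemma sum_priorWeight_card (α : Type*) [Fintype α] :
    ∑ S : Finset α, priorWeight (Fintype.card α) #S = 1 := by
  rw [← powerset_univ, sum_powerset_apply_card, card_univ]
  have hterm : ∀ k ∈ range (Fintype.card α + 1),
      (Fintype.card α).choose k • priorWeight (Fintype.card α) k
        = priorWeight (Fintype.card α) 0 := by
    intro k hk
    rw [nsmul_eq_mul, priorWeight, priorWeight, Nat.sub_zero, Nat.factorial_zero,
      ← Nat.choose_mul_factorial_mul_factorial (Nat.lt_succ_iff.mp (mem_range.mp hk))]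
    push_cast
    ring
  rw [sum_congr rfl hterm, sum_const, card_range, nsmul_eq_mul]
  exact_mod_cast succ_mul_priorWeight_zero _

lemma card_mul_sub_priorWeight_pred {n k : ℕ} (hk : k ≤ n) :
    k * (priorWeight n k - priorWeight n (k - 1))
      = (2 * k - n - 1) * priorWeight n k + if k = 0 then 1 else 0 := by
  rcases k with _ | k
  · rw [if_pos rfl, Nat.cast_zero]
    linear_combination succ_mul_priorWeight_zero n
  · have := sub_mul_priorWeight_succ (n := n) (k := k) (by omega)
    simp only [Nat.add_sub_cancel, Nat.add_one_ne_zero, if_false, add_zero]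
    push_cast
    linear_combination this

lemma sub_mul_priorWeight_succ_sub {n k : ℕ} (hk : k ≤ n) :
    ((n : ℝ) - k) * (priorWeight n (k + 1) - priorWeight n k)
      = (2 * k + 1 - n) * priorWeight n k - if k = n then 1 else 0 := by
  rcases hk.lt_or_eq with hk | rfl
  · rw [if_neg hk.ne]
    linear_combination sub_mul_priorWeight_succ hk
  · have := succ_mul_priorWeight_zero k
    rw [← priorWeight_sub_self (Nat.zero_le k), Nat.sub_zero] at this
    rw [if_pos rfl]
    linear_combination -this

lemma sum_biasD_priorWeight {n : ℕ} (v P : Finset (Fin n) → ℝ)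
    (hP : ∀ T, P T = priorWeight n #T) :
    ∑ i, biasD n v P i = v ∅ + v univ - 2 * ∑ S, priorWeight n #S * v S := by
  have hcoeff : ∀ S : Finset (Fin n),
      (#S * (priorWeight n #S - priorWeight n (#S - 1))
        - #Sᶜ * (priorWeight n (#S + 1) - priorWeight n #S)) * v S
      = (if S = ∅ then v S else 0) + (if S = univ then v S else 0)
        - 2 * (priorWeight n #S * v S) := by
    intro S
    have hS : #S ≤ n := by simpa using card_le_univ S
    rw [card_compl, Fintype.card_fin, Nat.cast_sub hS,
      card_mul_sub_priorWeight_pred hS, sub_mul_priorWeight_succ_sub hS]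
    have huniv : #S = n ↔ S = univ := by rw [← card_eq_iff_eq_univ, Fintype.card_fin]
    simp only [card_eq_zero, huniv]
    split_ifs <;> ring
  rw [sum_biasD_of_card v P _ hP, sum_congr rfl fun S _ ↦ hcoeff S, sum_sub_distrib,
    sum_add_distrib, sum_ite_eq' univ ∅, sum_ite_eq' univ univ, ← mul_sum]
  simp

section PriorWeight

variable {α : Type*} [Fintype α] [DecidableEq α]

lemma sum_priorWeight_card_mul_compl (f : Finset α → ℝ) :
    ∑ S, priorWeight (Fintype.card α) #S * f Sᶜ
      = ∑ S, priorWeight (Fintype.card α) #S * f S := by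
  have hsymm (S : Finset α) :
      priorWeight (Fintype.card α) #Sᶜ = priorWeight (Fintype.card α) #S := by
    rw [card_compl, priorWeight_sub_self (card_le_univ S)]
  rw [← compl_involutive.bijective.sum_comp fun S ↦ priorWeight (Fintype.card α) #S * f S]
  exact sum_congr rfl fun S _ ↦ by rw [hsymm]

lemma two_mul_sum_priorWeight_card_mul_le (v : Finset α → ℝ)
    (hsuper : ∀ S T, Disjoint S T → v S + v T ≤ v (S ∪ T)) :
    2 * ∑ S, priorWeight (Fintype.card α) #S * v S ≤ v univ :=
  calc 2 * ∑ S, priorWeight (Fintype.card α) #S * v S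
      = ∑ S, priorWeight (Fintype.card α) #S * (v S + v Sᶜ) := by
        rw [two_mul]
        nth_rewrite 2 [← sum_priorWeight_card_mul_compl]
        simp only [← sum_add_distrib, mul_add]
    _ ≤ ∑ S, priorWeight (Fintype.card α) #S * v univ := by
        gcongr with S
        · exact priorWeight_nonneg _ _
        · simpa using hsuper S Sᶜ disjoint_compl_right
    _ = v univ := by rw [← sum_mul, sum_priorWeight_card, one_mul]

end PriorWeight

theorem stmt_13_general (n : ℕ) (P : Finset (Fin n) → ℝ)
    (hP : ∀ T : Finset (Fin n),
      P T = (Nat.factorial T.card * Nat.factorial (n - T.card) : ℝ)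
              / (Nat.factorial (n + 1) : ℝ))
    (v : Finset (Fin n) → ℝ)
    (hsuper : ∀ S T : Finset (Fin n), Disjoint S T → v S + v T ≤ v (S ∪ T))
    (hv0 : v ∅ = 0) :
    0 ≤ ∑ i : Fin n, biasD n v P i := by
  rw [sum_biasD_priorWeight v P hP, hv0]
  have hle := two_mul_sum_priorWeight_card_mul_le v hsuper
  rw [Fintype.card_fin] at hle
  linarith

theorem stmt_13 (n : ℕ) (hn : 1 ≤ n) (P : Finset (Fin n) → ℝ)
    (hP : ∀ T : Finset (Fin n),
      P T = (Nat.factorial T.card * Nat.factorial (n - T.card) : ℝ)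
              / (Nat.factorial (n + 1) : ℝ))
    (v : Finset (Fin n) → ℝ)
    (hsuper : ∀ S T : Finset (Fin n), Disjoint S T → v S + v T ≤ v (S ∪ T))
    (hv0 : v ∅ = 0) :
    0 ≤ ∑ i : Fin n, biasD n v P i :=
  stmt_13_general n P hP v hsuper hv0
end
end
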